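/- arXiv:2306.08412 — 5 statements merged into one kernel-verified Lean document; each statement's English description precedes it below -/
import Mathlib

section
/- Let n ≥ 2 and k ≥ 2 be positive integers with k ≥ 2n - 3 + ⌊(n-1)/4⌋. If k = a₁ + a₂ + ⋯ + a_t where n - 1 ≥ a₁ ≥ a₂ ≥ ⋯ ≥ a_t ≥ 1, then the numbers a₁, a₂, …, a_t can be partitioned into three groups such that the sum of each group is at least ⌈n/4⌉, or into two groups such that the sum of each group is at least n - 2. -/
/-- The spanning subgraph of the complete graph on `Fin N` formed by the edges of color `i`
under the 2-edge-coloring `C` (colors are booleans). -/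
def colorGraph {N : ℕ} (C : Sym2 (Fin N) → Bool) (i : Bool) : SimpleGraph (Fin N) where
  Adj u v := u ≠ v ∧ C s(u, v) = i
  symm := by
    constructor
    intro u v h
    exact ⟨h.1.symm, by rw [Sym2.eq_swap]; exact h.2⟩
  loopless := by
    constructor
    intro u h
    exact h.1 rfl

/-- `S` is a monochromatic copy of `K_r` in color `i`. -/
def IsMonoClique {N : ℕ} (C : Sym2 (Fin N) → Bool) (i : Bool) (r : ℕ)
    (S : Finset (Fin N)) : Prop :=
  S.card = r ∧ ∀ u ∈ S, ∀ v ∈ S, u ≠ v → C s(u, v) = i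

/-- The coloring `C` contains `n` pairwise vertex-disjoint copies of `K_r` in color `i`. -/
def HasMonoCliqueMatching {N : ℕ} (C : Sym2 (Fin N) → Bool) (i : Bool) (n r : ℕ) : Prop :=
  ∃ f : Fin n → Finset (Fin N),
    (∀ j, IsMonoClique C i r (f j)) ∧
    ∀ j l, j ≠ l → Disjoint (f j) (f l)

/-- The coloring `C` contains a monochromatic connected `nK_r`-matching: `n` pairwise
vertex-disjoint copies of `K_r` in some color `i`, all of whose vertices lie in one
connected component of the spanning subgraph of color `i`. -/
def HasConnCliqueMatching {N : ℕ} (C : Sym2 (Fin N) → Bool) (n r : ℕ) : Prop :=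
  ∃ i : Bool, ∃ f : Fin n → Finset (Fin N),
    (∀ j, IsMonoClique C i r (f j)) ∧
    (∀ j l, j ≠ l → Disjoint (f j) (f l)) ∧
    ∀ u v : Fin N, (∃ j, u ∈ f j) → (∃ j, v ∈ f j) → (colorGraph C i).Reachable u v

/-- The coloring `C` contains a copy (as a subgraph) of `G` all of whose edges have color `i`. -/
def HasMonoCopy {N : ℕ} {V : Type*} (C : Sym2 (Fin N) → Bool) (i : Bool)
    (G : SimpleGraph V) : Prop :=
  ∃ f : V ↪ Fin N, ∀ u v : V, G.Adj u v → C s(f u, f v) = i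

/-!
If `a₀ ≥ n - 2`, split off `a₀`: the rest has sum `k - a₀ ≥ (2n - 3) - (n - 1) = n - 2`.
Otherwise every `aᵢ ≤ n - 3`, and with `q = ⌈n/4⌉` we cut two consecutive blocks greedily, each
time stopping as soon as the sum reaches `q`. Since the sequence is nonincreasing, the last term
of a block is at most its first term, which already lies in the part of sum `< q`; so a block
is either a single term (sum `≤ n - 3`) or has sum `≤ 2(q - 1) ≤ n - 3`. The remaining terms
then sum to at least `k - 2(n - 3) ≥ 3 + ⌊(n - 1)/4⌋ ≥ q`.
-/

open Finset

lemma exists_sum_Ico_ge_le_max {a : ℕ → ℕ} {m t q : ℕ} (hq : 0 < q)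
    (hfirst : ∀ l ∈ Ico m t, a l ≤ a m) (hsum : q ≤ ∑ l ∈ Ico m t, a l) :
    ∃ j, m < j ∧ j ≤ t ∧ q ≤ ∑ l ∈ Ico m j, a l ∧
      ∑ l ∈ Ico m j, a l ≤ max (a m) (2 * (q - 1)) := by
  classical
  have hex : ∃ j, q ≤ ∑ l ∈ Ico m j, a l := ⟨t, hsum⟩
  set j := Nat.find hex
  have hqj : q ≤ ∑ l ∈ Ico m j, a l := Nat.find_spec hex
  have hmj : m < j := by
    by_contra! h
    rw [Ico_eq_empty_of_le h, sum_empty] at hqj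
    omega
  have hjt : j ≤ t := Nat.find_min' hex hsum
  obtain ⟨p, hp⟩ : ∃ p, j = p + 1 := ⟨j - 1, by omega⟩
  have hprev : ∑ l ∈ Ico m p, a l < q := Nat.lt_of_not_le (Nat.find_min hex (by omega))
  rw [hp] at hqj hjt hmj
  have hlast : ∑ l ∈ Ico m (p + 1), a l = ∑ l ∈ Ico m p, a l + a p :=
    sum_Ico_succ_top (by omega) a
  refine ⟨p + 1, hmj, hjt, hqj, ?_⟩
  rcases Nat.lt_or_ge m p with hmp | hmp
  · have hp : a p ≤ a m := hfirst p (mem_Ico.2 ⟨hmp.le, by omega⟩)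
    have hm : a m ≤ ∑ l ∈ Ico m p, a l :=
      single_le_sum (fun _ _ => Nat.zero_le _) (mem_Ico.2 ⟨le_rfl, hmp⟩)
    omega
  · obtain rfl : p = m := by omega
    simp

lemma exists_two_groups {a : ℕ → ℕ} {b i t : ℕ} (hi : 0 < i) (hit : i < t)
    (h₀ : b ≤ ∑ l ∈ range i, a l) (h₁ : b ≤ ∑ l ∈ Ico i t, a l) :
    ∃ g : ℕ → Fin 2, (∀ c, ∃ l, l < t ∧ g l = c) ∧
      ∀ c, b ≤ ∑ l ∈ (range t).filter (fun l => g l = c), a l := by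
  refine ⟨fun l => if l < i then 0 else 1, fun c => ?_, fun c => ?_⟩ <;> fin_cases c
  · exact ⟨0, by omega, by simp [hi]⟩
  · exact ⟨i, hit, by simp⟩
  · convert h₀ using 2
    ext l; simp only [mem_filter, mem_range]; split_ifs <;> simp <;> omega
  · convert h₁ using 2
    ext l; simp only [mem_filter, mem_range, mem_Ico]; split_ifs <;> simp <;> omega

lemma exists_three_groups {a : ℕ → ℕ} {b i j t : ℕ} (hi : 0 < i) (hij : i < j) (hjt : j < t)
    (h₀ : b ≤ ∑ l ∈ range i, a l) (h₁ : b ≤ ∑ l ∈ Ico i j, a l)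
    (h₂ : b ≤ ∑ l ∈ Ico j t, a l) :
    ∃ g : ℕ → Fin 3, (∀ c, ∃ l, l < t ∧ g l = c) ∧
      ∀ c, b ≤ ∑ l ∈ (range t).filter (fun l => g l = c), a l := by
  refine ⟨fun l => if l < i then 0 else if l < j then 1 else 2, fun c => ?_, fun c => ?_⟩ <;>
    fin_cases c
  · exact ⟨0, by omega, by simp [hi]⟩
  · exact ⟨i, by omega, by simp [hij]⟩
  · exact ⟨j, hjt, by simp [show ¬j < i by omega]⟩
  · convert h₀ using 2
    ext l; simp only [mem_filter, mem_range]; split_ifs <;> simp <;> omega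
  · convert h₁ using 2
    ext l; simp only [mem_filter, mem_range, mem_Ico]; split_ifs <;> simp <;> omega
  · convert h₂ using 2
    ext l; simp only [mem_filter, mem_range, mem_Ico]; split_ifs <;> simp <;> omega

theorem partition_lemma_general (n k t : ℕ) (hk2 : 2 ≤ k)
    (hk : 2 * n - 3 + (n - 1) / 4 ≤ k)
    (a : ℕ → ℕ)
    (hsum : ∑ i ∈ Finset.range t, a i = k)
    (hmono : ∀ i j, i ≤ j → j < t → a j ≤ a i)
    (hub : a 0 ≤ n - 1) :
    (∃ g : ℕ → Fin 3,
        (∀ j : Fin 3, ∃ i, i < t ∧ g i = j) ∧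
        ∀ j : Fin 3, (n + 3) / 4 ≤ ∑ i ∈ (Finset.range t).filter (fun i => g i = j), a i) ∨
    (∃ g : ℕ → Fin 2,
        (∀ j : Fin 2, ∃ i, i < t ∧ g i = j) ∧
        ∀ j : Fin 2, n - 2 ≤ ∑ i ∈ (Finset.range t).filter (fun i => g i = j), a i) := by
  have hsplit (i : ℕ) (hi : i ≤ t) : ∑ l ∈ range i, a l + ∑ l ∈ Ico i t, a l = k := by
    rw [sum_range_add_sum_Ico a hi, hsum]
  by_cases hbig : n - 2 ≤ a 0
  · have ht : 1 < t := by
      by_contra! h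
      interval_cases t <;>
        simp only [range_zero, range_one, sum_empty, sum_singleton] at hsum <;> omega
    have h₁ := hsplit 1 ht.le
    rw [sum_range_one] at h₁
    exact Or.inr (exists_two_groups one_pos ht (by simpa using hbig) (by omega))
  · set q := (n + 3) / 4
    have hq : 0 < q := by omega
    have hfirst (i : ℕ) : ∀ l ∈ Ico i t, a l ≤ a i := fun l hl =>
      hmono i l (mem_Ico.1 hl).1 (mem_Ico.1 hl).2
    obtain ⟨i, hi, hit, hqi, hi_le⟩ :=
      exists_sum_Ico_ge_le_max hq (hfirst 0) (by rw [← range_eq_Ico]; omega)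
    rw [← range_eq_Ico] at hqi hi_le
    have hki := hsplit i hit
    obtain ⟨j, hij, hjt, hqj, hj_le⟩ := exists_sum_Ico_ge_le_max hq (hfirst i) (by omega)
    have hai : a i ≤ a 0 := hmono 0 i i.zero_le (by omega)
    have hkj := sum_Ico_consecutive a hij.le hjt
    have h₂ : q ≤ ∑ l ∈ Ico j t, a l := by omega
    have hjt' : j < t := nonempty_Ico.1 (nonempty_of_sum_ne_zero (hq.trans_le h₂).ne')
    exact Or.inl (exists_three_groups hi hij hjt' hqi hqj h₂)

/-- **Lemma 2 (partition lemma).** Let `n ≥ 2` and `k ≥ 2` with `k ≥ 2n - 3 + ⌊(n-1)/4⌋`.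
If `k = a₀ + a₁ + ⋯ + a_{t-1}` where `n - 1 ≥ a₀ ≥ a₁ ≥ ⋯ ≥ a_{t-1} ≥ 1`, then the `aᵢ`
can be partitioned into three nonempty groups each of sum at least `⌈n/4⌉`, or into two
nonempty groups each of sum at least `n - 2`. -/
theorem partition_lemma (n k t : ℕ) (hn : 2 ≤ n) (hk2 : 2 ≤ k)
    (hk : 2 * n - 3 + (n - 1) / 4 ≤ k)
    (ht : 1 ≤ t) (a : ℕ → ℕ)
    (hsum : ∑ i ∈ Finset.range t, a i = k)
    (hmono : ∀ i j, i ≤ j → j < t → a j ≤ a i)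
    (hub : a 0 ≤ n - 1)
    (hlb : ∀ i, i < t → 1 ≤ a i) :
    (∃ g : ℕ → Fin 3,
        (∀ j : Fin 3, ∃ i, i < t ∧ g i = j) ∧
        ∀ j : Fin 3, (n + 3) / 4 ≤ ∑ i ∈ (Finset.range t).filter (fun i => g i = j), a i) ∨
    (∃ g : ℕ → Fin 2,
        (∀ j : Fin 2, ∃ i, i < t ∧ g i = j) ∧
        ∀ j : Fin 2, n - 2 ≤ ∑ i ∈ (Finset.range t).filter (fun i => g i = j), a i) :=
  partition_lemma_general n k t hk2 hk a hsum hmono hub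
end

section
/- Let k ≥ 1 and u ≥ 0 be integers, and let a red/blue edge-coloring of the complete graph on 4k + u vertices be given. Suppose the coloring contains at most k pairwise vertex-disjoint blue copies of K₄ (equivalently, it contains no k+1 pairwise vertex-disjoint blue copies of K₄). Then the coloring contains at least f_k(u) pairwise vertex-disjoint red edges (a red matching of size f_k(u)). -/
/-- The function `f_k(u)`. -/
def fAux (k u : ℕ) : ℕ :=
  if u ≤ 3 then 0
  else if u ≤ k + 3 then u - 3
  else (u + k - 2) / 2

/-!
Take a maximum red matching `M`, with `ν < f_k(u)` edges. By maximality the unmatched vertices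
span a blue clique `U`, and every edge `xy` of `M` has an endpoint that is blue to all of `U` but
at most one vertex: otherwise `xy` could be exchanged for two disjoint red edges into `U`. Such an
endpoint together with three vertices of `U` is a blue `K₄`; using `min ν (k + 1)` of them and
splitting the rest of `U` into blue `K₄`'s gives `k + 1` disjoint blue `K₄`'s, and `ν < f_k(u)`
leaves enough unmatched vertices for this.
-/

lemma budget_of_lt_fAux {k u ν : ℕ} (h : ν < fAux k u) :
    3 * min ν (k + 1) + 4 * (k + 1 - min ν (k + 1)) ≤ 4 * k + u - 2 * ν ∧
      3 * min ν (k + 1) < 4 * k + u - 2 * ν := by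
  unfold fAux at h
  split_ifs at h <;> omega

namespace SimpleGraph

variable {V : Type*} {G : SimpleGraph V} {r : ℕ}

def IsCliquePacking (G : SimpleGraph V) (r : ℕ) (P : Finset (Finset V)) : Prop :=
  (∀ S ∈ P, G.IsNClique r S) ∧ (P : Set (Finset V)).PairwiseDisjoint id

lemma IsCliquePacking.subset {P P' : Finset (Finset V)} (hP : G.IsCliquePacking r P)
    (h : P' ⊆ P) : G.IsCliquePacking r P' :=
  ⟨fun S hS => hP.1 S (h hS), hP.2.subset (by simpa using h)⟩

section DecidableEq

variable [DecidableEq V] {P : Finset (Finset V)} {S : Finset V}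

lemma IsCliquePacking.insert (hP : G.IsCliquePacking r P) (hS : G.IsNClique r S)
    (hdisj : ∀ T ∈ P, Disjoint S T) : G.IsCliquePacking r (insert S P) := by
  refine ⟨by simpa [hS] using hP.1, ?_⟩
  rw [Finset.coe_insert]
  exact hP.2.insert fun T hT _ => hdisj T hT

lemma card_insert_of_isNClique (hr : 0 < r) (hS : G.IsNClique r S)
    (hdisj : ∀ T ∈ P, Disjoint S T) : (insert S P).card = P.card + 1 := by
  refine Finset.card_insert_of_notMem fun hSP => ?_
  have : S = ∅ := disjoint_self.mp (hdisj S hSP)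
  rw [this, isNClique_empty] at hS
  omega

lemma IsCliquePacking.card_biUnion (hP : G.IsCliquePacking r P) :
    (P.biUnion id).card = r * P.card := by
  rw [Finset.card_biUnion hP.2]
  simp only [id_eq]
  rw [Finset.sum_congr rfl fun S hS => (hP.1 S hS).card_eq,
    Finset.sum_const, smul_eq_mul, mul_comm]

lemma isNClique_pair {a b : V} (h : G.Adj a b) : G.IsNClique 2 {a, b} :=
  (isNClique_singleton.mpr rfl).insert (by simpa using h)

lemma exists_adj_of_isNClique_two (h : G.IsNClique 2 S) : ∃ a b, G.Adj a b ∧ S = {a, b} := by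
  obtain ⟨a, b, hab, rfl⟩ := Finset.card_eq_two.mp h.card_eq
  exact ⟨a, b, h.isClique (by simp) (by simp) hab, rfl⟩

lemma exists_isCliquePacking_of_isClique (hr : 0 < r) (q : ℕ) :
    ∀ B : Finset V, G.IsClique (B : Set V) → r * q ≤ B.card →
      ∃ P, G.IsCliquePacking r P ∧ P.card = q ∧ ∀ S ∈ P, S ⊆ B := by
  induction q with
  | zero => exact fun _ _ _ => ⟨∅, by simp [IsCliquePacking], rfl, by simp⟩
  | succ q ih =>
    intro B hB hcard
    obtain ⟨T, hTB, hTcard⟩ := Finset.exists_subset_card_eq (s := B) (n := r) (by nlinarith)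
    have hT : G.IsNClique r T := ⟨hB.subset (by simpa using hTB), hTcard⟩
    obtain ⟨P, hP, hPcard, hPB⟩ := ih (B \ T) (hB.subset (by simp))
      (by rw [Finset.card_sdiff_of_subset hTB]; lia)
    have hdisj : ∀ S ∈ P, Disjoint T S := fun S hS =>
      Finset.disjoint_sdiff.mono_right (hPB S hS)
    refine ⟨insert T P, hP.insert hT hdisj, by rw [card_insert_of_isNClique hr hT hdisj, hPcard],
      ?_⟩
    simp only [Finset.mem_insert, forall_eq_or_imp]
    exact ⟨hTB, fun S hS => (hPB S hS).trans Finset.sdiff_subset⟩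

/-- The centers take their `r`-sets first, while `B` is still large enough for each of them to
avoid its exceptional vertex `z`; what is left of `B` still holds the `q` further cliques. -/
lemma exists_isCliquePacking_of_centers (r q : ℕ) :
    ∀ A B : Finset V, Disjoint A B → G.IsClique (B : Set V) →
      (∀ a ∈ A, ∃ z, ∀ v ∈ B, v ≠ z → G.Adj a v) → r * A.card < B.card →
      r * A.card + (r + 1) * q ≤ B.card →
      ∃ P, G.IsCliquePacking (r + 1) P ∧ P.card = A.card + q ∧ ∀ S ∈ P, S ⊆ A ∪ B := by
  intro A
  induction A using Finset.induction_on with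
  | empty =>
    intro B _ hB _ _ hcard
    obtain ⟨P, hP, hPcard, hPB⟩ :=
      exists_isCliquePacking_of_isClique r.succ_pos q B hB (by simpa using hcard)
    exact ⟨P, hP, by simpa using hPcard, by simpa using hPB⟩
  | insert a A haA ih =>
    intro B hAB hB hcenter hlt hcard
    rw [Finset.card_insert_of_notMem haA, mul_add_one] at hlt hcard
    obtain ⟨z, hz⟩ := hcenter a (Finset.mem_insert_self a A)
    obtain ⟨T, hTB, hTcard⟩ := Finset.exists_subset_card_eq (s := B.erase z) (n := r)
      (by have := Finset.pred_card_le_card_erase (s := B) (a := z); lia)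
    have hTB' : T ⊆ B := hTB.trans (Finset.erase_subset z B)
    have haT : ∀ v ∈ T, G.Adj a v := fun v hv =>
      hz v (hTB' hv) (Finset.ne_of_mem_erase (hTB hv))
    have hK : G.IsNClique (r + 1) (insert a T) :=
      IsNClique.insert ⟨hB.subset (by simpa using hTB'), hTcard⟩ haT
    obtain ⟨P, hP, hPcard, hPAB⟩ :=
      ih (B \ T) (hAB.mono (Finset.subset_insert a A) Finset.sdiff_subset) (hB.subset (by simp))
      (fun a' ha' => (hcenter a' (Finset.mem_insert_of_mem ha')).imp
        fun z' hz' v hv => hz' v (Finset.mem_sdiff.mp hv).1)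
      (by rw [Finset.card_sdiff_of_subset hTB']; lia)
      (by rw [Finset.card_sdiff_of_subset hTB']; lia)
    have hdisj : ∀ S ∈ P, Disjoint (insert a T) S := by
      intro S hS
      refine Disjoint.mono_right (hPAB S hS) ?_
      have haB : a ∉ B := Finset.disjoint_left.mp hAB (Finset.mem_insert_self a A)
      have hTA : Disjoint T A := (hAB.mono_left (Finset.subset_insert a A)).symm.mono_left hTB'
      simp [Finset.disjoint_insert_left, haA, haB, hTA, Finset.disjoint_sdiff]
    refine ⟨insert (insert a T) P, hP.insert hK hdisj, ?_, ?_⟩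
    · rw [card_insert_of_isNClique r.succ_pos hK hdisj, hPcard, Finset.card_insert_of_notMem haA]
      ring
    · simp only [Finset.mem_insert, forall_eq_or_imp]
      refine ⟨Finset.insert_subset (by simp) (hTB'.trans Finset.subset_union_right), fun S hS => ?_⟩
      exact (hPAB S hS).trans
        (Finset.union_subset_union (Finset.subset_insert a A) Finset.sdiff_subset)

end DecidableEq

def IsMaxCliquePacking (G : SimpleGraph V) (r : ℕ) (M : Finset (Finset V)) : Prop :=
  G.IsCliquePacking r M ∧ ∀ P, G.IsCliquePacking r P → P.card ≤ M.card

lemma exists_isMaxCliquePacking [Finite V] (G : SimpleGraph V) (r : ℕ) :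
    ∃ M, G.IsMaxCliquePacking r M := by
  classical
  have := Fintype.ofFinite V
  obtain ⟨M, hM, hmax⟩ := Finset.exists_max_image
    (Finset.univ.filter (G.IsCliquePacking r)) Finset.card ⟨∅, by simp [IsCliquePacking]⟩
  exact ⟨M, (Finset.mem_filter.mp hM).2, fun P hP => hmax P (by simpa using hP)⟩

section DecidableEq

variable [DecidableEq V] {M : Finset (Finset V)}

lemma IsMaxCliquePacking.isClique_compl_uncovered (hM : G.IsMaxCliquePacking 2 M) :
    Gᶜ.IsClique ((M.biUnion id : Set V)ᶜ) := by
  intro a ha b hb hab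
  refine (compl_adj G a b).mpr ⟨hab, fun hadj => ?_⟩
  have hdisj : ∀ T ∈ M, Disjoint {a, b} T := (Finset.disjoint_biUnion_right _ _ _).mp <| by
    simp_all [Finset.disjoint_insert_left]
  have := hM.2 _ (hM.1.insert (isNClique_pair hadj) hdisj)
  rw [card_insert_of_isNClique two_pos (isNClique_pair hadj) hdisj] at this
  omega

/-- If `x` had a neighbour `z` and `y` a neighbour `v ≠ z` among the unmatched vertices, replacing
the edge `xy` by `xz` and `yv` would enlarge the matching. -/
lemma IsMaxCliquePacking.exists_mem_adj_compl_uncovered (hM : G.IsMaxCliquePacking 2 M)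
    {e : Finset V} (he : e ∈ M) :
    ∃ w ∈ e, ∃ z, ∀ v ∉ M.biUnion id, v ≠ z → Gᶜ.Adj w v := by
  obtain ⟨x, y, hxy, rfl⟩ := exists_adj_of_isNClique_two (hM.1.1 _ he)
  have hcovered : ∀ c ∈ ({x, y} : Finset V), c ∈ M.biUnion id := fun c hc =>
    Finset.mem_biUnion.mpr ⟨_, he, hc⟩
  by_cases hx : ∃ z ∉ M.biUnion id, G.Adj x z
  · obtain ⟨z, hzU, hxz⟩ := hx
    refine ⟨y, by simp, z, fun v hvU hvz => ?_⟩
    refine (compl_adj G y v).mpr ⟨fun h => hvU (h ▸ hcovered y (by simp)), fun hyv => ?_⟩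
    have hM₀ : G.IsCliquePacking 2 (M.erase {x, y}) := hM.1.subset (Finset.erase_subset _ _)
    have hout : ∀ T ∈ M.erase {x, y}, ∀ c, c ∈ ({x, y} : Finset V) ∨ c ∉ M.biUnion id → c ∉ T := by
      rintro T hT c (hc | hc) hcT
      · obtain ⟨hne, hT⟩ := Finset.mem_erase.mp hT
        exact Finset.disjoint_left.mp (hM.1.2 he hT hne.symm) hc hcT
      · exact hc (Finset.mem_biUnion.mpr ⟨T, Finset.mem_of_mem_erase hT, hcT⟩)
    have h₁ : ∀ T ∈ M.erase {x, y}, Disjoint {x, z} T := fun T hT => by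
      simp only [Finset.disjoint_insert_left, Finset.disjoint_singleton_left]
      exact ⟨hout T hT x (.inl (by simp)), hout T hT z (.inr hzU)⟩
    have h₂ : ∀ T ∈ insert {x, z} (M.erase {x, y}), Disjoint {y, v} T := by
      intro T hT
      simp only [Finset.disjoint_insert_left, Finset.disjoint_singleton_left]
      rcases Finset.mem_insert.mp hT with rfl | hT
      · have hxU := hcovered x (by simp)
        have hyU := hcovered y (by simp)
        simp only [Finset.mem_insert, Finset.mem_singleton, not_or]
        exact ⟨⟨hxy.ne.symm, fun h => hzU (h ▸ hyU)⟩, fun h => hvU (h ▸ hxU), hvz⟩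
      · exact ⟨hout T hT y (.inl (by simp)), hout T hT v (.inr hvU)⟩
    have := hM.2 _ ((hM₀.insert (isNClique_pair hxz) h₁).insert (isNClique_pair hyv) h₂)
    rw [card_insert_of_isNClique two_pos (isNClique_pair hyv) h₂,
      card_insert_of_isNClique two_pos (isNClique_pair hxz) h₁, Finset.card_erase_of_mem he] at this
    have := Finset.card_pos.mpr ⟨_, he⟩
    omega
  · simp only [not_exists, not_and] at hx
    exact ⟨x, by simp, x, fun v hvU hvx => (compl_adj G x v).mpr ⟨hvx.symm, hx v hvU⟩⟩

end DecidableEq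

theorem exists_isCliquePacking_two_fAux_le [Fintype V] (G : SimpleGraph V) {k u : ℕ}
    (hV : Fintype.card V = 4 * k + u) (hK4 : ∀ P, Gᶜ.IsCliquePacking 4 P → P.card ≤ k) :
    ∃ M, G.IsCliquePacking 2 M ∧ fAux k u ≤ M.card := by
  classical
  obtain ⟨M, hM⟩ := G.exists_isMaxCliquePacking 2
  refine ⟨M, hM.1, not_lt.mp fun hlt => ?_⟩
  set U := (M.biUnion id)ᶜ
  have hU : U.card = 4 * k + u - 2 * M.card := by rw [Finset.card_compl, hM.1.card_biUnion, hV]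
  have hgood : ∀ e ∈ M, ∃ w ∈ e, ∃ z, ∀ v ∉ M.biUnion id, v ≠ z → Gᶜ.Adj w v :=
    fun e he => hM.exists_mem_adj_compl_uncovered he
  obtain ⟨hfit, hlt'⟩ := budget_of_lt_fAux hlt
  obtain ⟨v₀, -⟩ := Finset.card_pos.mp (by omega : 0 < U.card)
  have : Nonempty V := ⟨v₀⟩
  choose! w hw z hz using hgood
  obtain ⟨M', hM'M, hM'card⟩ := Finset.exists_subset_card_eq (min_le_left M.card (k + 1))
  have hw_inj : Set.InjOn w M' := fun e he e' he' hee' => by_contra fun hne =>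
    Finset.disjoint_left.mp (hM.1.2 (hM'M he) (hM'M he') hne) (hw e (hM'M he))
      (hee' ▸ hw e' (hM'M he'))
  have hAcard : (M'.image w).card = min M.card (k + 1) := by
    rw [Finset.card_image_of_injOn hw_inj, hM'card]
  have hAU : Disjoint (M'.image w) U := by
    refine disjoint_compl_right_iff.mpr (Finset.image_subset_iff.mpr fun e he => ?_)
    exact Finset.mem_biUnion.mpr ⟨e, hM'M he, hw e (hM'M he)⟩
  have hcenters : ∀ a ∈ M'.image w, ∃ z, ∀ v ∈ U, v ≠ z → Gᶜ.Adj a v := by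
    simp only [Finset.forall_mem_image]
    exact fun e he => ⟨z e, fun v hv => hz e (hM'M he) v (Finset.mem_compl.mp hv)⟩
  obtain ⟨P, hP, hPcard, -⟩ := Gᶜ.exists_isCliquePacking_of_centers 3 (k + 1 - min M.card (k + 1))
    (M'.image w) U hAU (by simpa [U] using hM.isClique_compl_uncovered) hcenters (by omega)
    (by omega)
  have := hK4 P hP
  omega

end SimpleGraph

lemma isMonoClique_iff {N : ℕ} {C : Sym2 (Fin N) → Bool} {i : Bool} {r : ℕ} {S : Finset (Fin N)} :
    IsMonoClique C i r S ↔ (colorGraph C i).IsNClique r S := by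
  rw [IsMonoClique, SimpleGraph.isNClique_iff]
  exact ⟨fun ⟨hc, h⟩ => ⟨fun x hx y hy hxy => ⟨hxy, h x hx y hy hxy⟩, hc⟩,
    fun ⟨h, hc⟩ => ⟨hc, fun x hx y hy hxy => (h hx hy hxy).2⟩⟩

lemma compl_colorGraph {N : ℕ} (C : Sym2 (Fin N) → Bool) (i : Bool) :
    (colorGraph C i)ᶜ = colorGraph C !i := by
  ext u v
  cases hC : C s(u, v) <;> cases i <;> simp [colorGraph, hC]

lemma hasMonoCliqueMatching_of_isCliquePacking {N : ℕ} {C : Sym2 (Fin N) → Bool} {i : Bool}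
    {n r : ℕ} {P : Finset (Finset (Fin N))} (hP : (colorGraph C i).IsCliquePacking r P)
    (hn : n ≤ P.card) : HasMonoCliqueMatching C i n r := by
  obtain ⟨P', hP'P, hP'card⟩ := Finset.exists_subset_card_eq hn
  let e : Fin n ≃ P' := (finCongr hP'card.symm).trans P'.equivFin.symm
  exact ⟨fun j => e j, fun j => isMonoClique_iff.mpr (hP.1 _ (hP'P (e j).2)),
    fun j l hjl => hP.2 (hP'P (e j).2) (hP'P (e l).2) fun h => hjl (e.injective (Subtype.ext h))⟩

theorem red_matching_from_few_blue_K4_general (k u : ℕ)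
    (C : Sym2 (Fin (4 * k + u)) → Bool)
    (hblue : ¬ HasMonoCliqueMatching C false (k + 1) 4) :
    HasMonoCliqueMatching C true (fAux k u) 2 := by
  have hK4 : ∀ P, (colorGraph C true)ᶜ.IsCliquePacking 4 P → P.card ≤ k := fun P hP => by
    by_contra! h
    rw [compl_colorGraph] at hP
    exact hblue (hasMonoCliqueMatching_of_isCliquePacking hP h)
  obtain ⟨M, hM, hcard⟩ :=
    (colorGraph C true).exists_isCliquePacking_two_fAux_le (Fintype.card_fin _) hK4
  exact hasMonoCliqueMatching_of_isCliquePacking hM hcard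

/-- **Lemma 3.** Let `k ≥ 1` and `u ≥ 0`, and let `C` be a red/blue coloring of the complete
graph on `4k + u` vertices (here `true` is red and `false` is blue). If `C` contains at most
`k` pairwise vertex-disjoint blue copies of `K₄`, then `C` contains a red matching of size
`f_k(u)`. -/
theorem red_matching_from_few_blue_K4 (k u : ℕ) (hk : 1 ≤ k)
    (C : Sym2 (Fin (4 * k + u)) → Bool)
    (hblue : ¬ HasMonoCliqueMatching C false (k + 1) 4) :
    HasMonoCliqueMatching C true (fAux k u) 2 :=
  red_matching_from_few_blue_K4_general k u C hblue
end

section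
/- Suppose that every red/blue edge-coloring of the complete graph on 23 vertices contains two pairwise vertex-disjoint copies of K₄ in the same color (i.e., R₂(2K₄) ≤ 23). Then R₂(c(2K₄)) = 23; that is, 23 is the least integer N such that every red/blue edge-coloring of the complete graph on N vertices contains a monochromatic connected 2K₄-matching. -/
/-!
Lower bound: on `N ≤ 22` vertices, colour an edge `true` when both ends lie in the same block
`{7k, …, 7k + 6}`. The `true` components have at most 7 vertices, and a `false` `K₄` has its
vertices in four distinct blocks, so it contains vertex 21; neither colour has a connected `2K₄`.

Upper bound: let `G` be the graph of the colour of two given disjoint `K₄`. If they lie in different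
components of `G`, then `Gᶜ` is connected, so it suffices to find two disjoint `K₄` of `Gᶜ` or two
disjoint `K₄` of `G` joined by a path. Split the vertices into the components `P`, `Q` of the two
`K₄` and the rest `W`. All edges between these parts lie in `Gᶜ`, so `Gᶜ`-cliques taken from
different parts combine into larger ones. On the other hand, 9 vertices without two disjoint
`Gᶜ`-edges contain two linked `K₄` of `G`, and 13 vertices without a `Gᶜ`-triangle contain two
disjoint `K₄` of `G` (as `R(3,4) = 9`). With 23 vertices, the sizes of `P`, `Q`, `W` always force
one of these configurations.
-/

open Finset

namespace SimpleGraph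

variable {V : Type*} (G : SimpleGraph V)

def HasDisjointCliques (X : Finset V) (a b : ℕ) : Prop :=
  ∃ S ⊆ X, ∃ T ⊆ X, Disjoint S T ∧ G.IsNClique a S ∧ G.IsNClique b T

def HasLinkedCliques (n : ℕ) : Prop :=
  ∃ S T : Finset V, Disjoint S T ∧ G.IsNClique n S ∧ G.IsNClique n T ∧
    ∃ s ∈ S, ∃ t ∈ T, G.Reachable s t

variable {G} {X Y Z : Finset V} {a b c d n : ℕ}

theorem HasDisjointCliques.mono (h : G.HasDisjointCliques X a b) (hXY : X ⊆ Y) :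
    G.HasDisjointCliques Y a b :=
  let ⟨S, hS, T, hT, hST, cS, cT⟩ := h
  ⟨S, hS.trans hXY, T, hT.trans hXY, hST, cS, cT⟩

theorem HasDisjointCliques.symm (h : G.HasDisjointCliques X a b) :
    G.HasDisjointCliques X b a :=
  let ⟨S, hS, T, hT, hST, cS, cT⟩ := h
  ⟨T, hT, S, hS, hST.symm, cT, cS⟩

theorem IsClique.reachable (hX : G.IsClique (X : Set V)) {u v : V} (hu : u ∈ X) (hv : v ∈ X) :
    G.Reachable u v := by
  obtain rfl | huv := eq_or_ne u v
  · rfl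
  · exact (hX hu hv huv).reachable

theorem HasDisjointCliques.hasLinkedCliques (h : G.HasDisjointCliques X n n)
    (hX : ∀ u ∈ X, ∀ v ∈ X, G.Reachable u v) (hn : 0 < n) : G.HasLinkedCliques n := by
  obtain ⟨S, hS, T, hT, hST, cS, cT⟩ := h
  obtain ⟨s, hs⟩ := card_pos.1 (cS.card_eq ▸ hn)
  obtain ⟨t, ht⟩ := card_pos.1 (cT.card_eq ▸ hn)
  exact ⟨S, T, hST, cS, cT, s, hs, t, ht, hX s (hS hs) t (hT ht)⟩

theorem adj_of_not_compl_adj {x y : V} (hxy : x ≠ y) (h : ¬ Gᶜ.Adj x y) : G.Adj x y :=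
  not_not.1 fun h' => h ((compl_adj G x y).2 ⟨hxy, h'⟩)

theorem exists_compl_adj_of_not_isClique (h : ¬ G.IsClique (X : Set V)) :
    ∃ u ∈ X, ∃ v ∈ X, Gᶜ.Adj u v := by
  rw [isClique_iff, Set.Pairwise] at h
  push Not at h
  obtain ⟨u, hu, v, hv, huv, hnadj⟩ := h
  exact ⟨u, hu, v, hv, (compl_adj G u v).2 ⟨huv, hnadj⟩⟩

section DecidableEq

variable [DecidableEq V]

theorem isNClique_pair_iff {u v : V} : G.IsNClique 2 {u, v} ↔ G.Adj u v := by
  refine ⟨fun h => ?_, fun h => ⟨by simpa using isClique_pair.2 fun _ => h, card_pair h.ne⟩⟩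
  have huv : u ≠ v := by
    rintro rfl
    simpa using h.card_eq
  exact h.isClique (by simp) (by simp) huv

theorem IsNClique.union {S T : Finset V} (hS : G.IsNClique a S) (hT : G.IsNClique b T)
    (hST : G.IsCompleteBetween S T) : G.IsNClique (a + b) (S ∪ T) := by
  refine ⟨?_, ?_⟩
  · rw [coe_union, isClique_iff, Set.pairwise_union]
    exact ⟨hS.isClique, hT.isClique, fun s hs t ht _ => ⟨hST hs ht, (hST hs ht).symm⟩⟩
  · rw [card_union_of_disjoint (disjoint_coe.1 hST.disjoint), hS.card_eq, hT.card_eq]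

theorem isCompleteBetween_union_left (hXZ : G.IsCompleteBetween X Z)
    (hYZ : G.IsCompleteBetween Y Z) : G.IsCompleteBetween ↑(X ∪ Y) Z :=
  fun _ hx _ hz => (mem_union.1 hx).elim (hXZ · hz) (hYZ · hz)

theorem isCompleteBetween_union_right (hXY : G.IsCompleteBetween X Y)
    (hXZ : G.IsCompleteBetween X Z) : G.IsCompleteBetween X ↑(Y ∪ Z) :=
  fun _ hx _ hy => (mem_union.1 hy).elim (hXY hx ·) (hXZ hx ·)

theorem HasDisjointCliques.union (h₁ : G.HasDisjointCliques X a b)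
    (h₂ : G.HasDisjointCliques Y c d) (hXY : G.IsCompleteBetween X Y) :
    G.HasDisjointCliques (X ∪ Y) (a + c) (b + d) := by
  obtain ⟨S, hS, T, hT, hST, cS, cT⟩ := h₁
  obtain ⟨S', hS', T', hT', hST', cS', cT'⟩ := h₂
  have hXY' : Disjoint X Y := disjoint_coe.1 hXY.disjoint
  refine ⟨S ∪ S', union_subset_union hS hS', T ∪ T', union_subset_union hT hT', ?_,
    cS.union cS' fun s hs t ht => hXY (hS hs) (hS' ht),
    cT.union cT' fun s hs t ht => hXY (hT hs) (hT' ht)⟩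
  rw [disjoint_union_left, disjoint_union_right, disjoint_union_right]
  exact ⟨⟨hST, hXY'.mono hS hT'⟩, ⟨hXY'.symm.mono hS' hT, hST'⟩⟩

theorem hasDisjointCliques_of_subset_sdiff {S T : Finset V} (hS : G.IsNClique a S) (hSX : S ⊆ X)
    (hT : G.IsNClique b T) (hTX : T ⊆ X \ S) : G.HasDisjointCliques X a b :=
  ⟨S, hSX, T, hTX.trans sdiff_subset, disjoint_of_subset_right hTX disjoint_sdiff, hS, hT⟩

theorem HasDisjointCliques.of_isNClique {S : Finset V} (hS : G.IsNClique a S) (hSX : S ⊆ X)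
    (h : a < #X) : G.HasDisjointCliques X a 1 := by
  obtain ⟨x, hx⟩ : (X \ S).Nonempty := by
    rw [← card_pos, card_sdiff_of_subset hSX, hS.card_eq]
    omega
  exact hasDisjointCliques_of_subset_sdiff hS hSX (isNClique_singleton.2 rfl)
    (singleton_subset_iff.2 hx)

theorem hasDisjointCliques_one_one (h : 2 ≤ #X) : G.HasDisjointCliques X 1 1 := by
  obtain ⟨x, hx⟩ := card_pos.1 (by omega : 0 < #X)
  exact HasDisjointCliques.of_isNClique (isNClique_singleton.2 rfl)
    (singleton_subset_iff.2 hx) (by omega)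

theorem HasDisjointCliques.of_isClique (hX : G.IsClique X) (h : a + b ≤ #X) :
    G.HasDisjointCliques X a b := by
  obtain ⟨S, hSX, hS⟩ := exists_subset_card_eq (h.trans' (Nat.le_add_right a b))
  obtain ⟨T, hTS, hT⟩ := exists_subset_card_eq (show b ≤ #(X \ S) by
    rw [card_sdiff_of_subset hSX]; omega)
  exact hasDisjointCliques_of_subset_sdiff ⟨hX.subset hSX, hS⟩ hSX
    ⟨hX.subset (hTS.trans sdiff_subset), hT⟩ hTS

theorem hasLinkedCliques_of_isClique (hX : G.IsClique (X : Set V)) (hn : 0 < n)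
    (h : 2 * n ≤ #X) : G.HasLinkedCliques n :=
  (HasDisjointCliques.of_isClique hX (by omega)).hasLinkedCliques
    (fun _ hu _ hv => hX.reachable hu hv) hn

theorem hasLinkedCliques_of_isClique_insert {z : V} (hY : G.IsClique (Y : Set V))
    (hz : ∀ y ∈ Y, G.Adj z y) (hn : 0 < n) (h : 2 * n ≤ #Y + 1) : G.HasLinkedCliques n := by
  refine hasLinkedCliques_of_isClique (X := insert z Y) ?_ hn ?_
  · rw [coe_insert]
    exact hY.insert fun y hy _ => hz y hy
  · rwa [card_insert_of_notMem fun h => (hz z h).ne rfl]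

theorem hasLinkedCliques_or_hasDisjointCliques_compl_two_one (hn : 0 < n) (h : 2 * n ≤ #X)
    (h3 : 3 ≤ #X) : G.HasLinkedCliques n ∨ Gᶜ.HasDisjointCliques X 2 1 := by
  by_cases hcl : G.IsClique (X : Set V)
  · exact .inl (hasLinkedCliques_of_isClique hcl hn h)
  obtain ⟨u, hu, v, hv, huv⟩ := exists_compl_adj_of_not_isClique hcl
  exact .inr (HasDisjointCliques.of_isNClique (isNClique_pair_iff.2 huv)
    (by simp [insert_subset_iff, hu, hv]) (by omega))

theorem adj_of_not_hasDisjointCliques_compl (h : ¬ Gᶜ.HasDisjointCliques X 2 2) {u v x y : V}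
    (hu : u ∈ X) (hv : v ∈ X) (huv : Gᶜ.Adj u v) (hx : x ∈ X) (hy : y ∈ X) (hxy : x ≠ y)
    (hxu : x ≠ u) (hxv : x ≠ v) (hyu : y ≠ u) (hyv : y ≠ v) : G.Adj x y :=
  adj_of_not_compl_adj hxy fun hc => h ⟨{u, v}, by simp [insert_subset_iff, hu, hv], {x, y},
    by simp [insert_subset_iff, hx, hy], by simp [hxu, hxv, hyu, hyv], isNClique_pair_iff.2 huv,
    isNClique_pair_iff.2 hc⟩

theorem hasLinkedCliques_of_isClique_of_forall_adj {Y : Finset V} {u v : V}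
    (hY : G.IsClique (Y : Set V)) (huv : u ≠ v) (hu : ∀ y ∈ Y, G.Adj u y)
    (hv : ∀ y ∈ Y, G.Adj v y) (hn : 1 ≤ n) (hcard : 2 * n ≤ #Y) :
    G.HasLinkedCliques (n + 1) := by
  obtain ⟨S, hSY, T, hTY, hST, cS, cT⟩ := HasDisjointCliques.of_isClique hY (a := n) (b := n)
    (by omega)
  obtain ⟨s, hs⟩ := card_pos.1 (cS.card_eq ▸ hn)
  obtain ⟨t, ht⟩ := card_pos.1 (cT.card_eq ▸ hn)
  have huT : u ∉ T := fun h => (hu u (hTY h)).ne rfl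
  have hvS : v ∉ S := fun h => (hv v (hSY h)).ne rfl
  refine ⟨insert u S, insert v T, ?_, cS.insert fun y hy => hu y (hSY hy),
    cT.insert fun y hy => hv y (hTY hy), s, mem_insert_of_mem hs, t, mem_insert_of_mem ht,
    hY.reachable (hSY hs) (hTY ht)⟩
  simp [disjoint_insert_left, disjoint_insert_right, huv.symm, huT, hvS, hST]

theorem hasLinkedCliques_or_hasDisjointCliques_compl_two_two (hn : 1 ≤ n)
    (hX : 2 * n + 3 ≤ #X) : G.HasLinkedCliques (n + 1) ∨ Gᶜ.HasDisjointCliques X 2 2 := by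
  refine or_iff_not_imp_right.2 fun h => ?_
  by_cases hcl : G.IsClique (X : Set V)
  · exact hasLinkedCliques_of_isClique hcl (by omega) (by omega)
  obtain ⟨u, hu, v, hv, huv⟩ := exists_compl_adj_of_not_isClique hcl
  set Y := X \ {u, v} with hYdef
  have memY : ∀ {y}, y ∈ Y ↔ y ∈ X ∧ y ≠ u ∧ y ≠ v := by simp [hYdef]
  have hYcard : 2 * n + 1 ≤ #Y := by
    rw [card_sdiff_of_subset (by simp [insert_subset_iff, hu, hv]), card_pair huv.ne]
    omega
  have hY : G.IsClique (Y : Set V) := fun x hx y hy hxy =>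
    adj_of_not_hasDisjointCliques_compl h hu hv huv (memY.1 hx).1 (memY.1 hy).1 hxy
      (memY.1 hx).2.1 (memY.1 hx).2.2 (memY.1 hy).2.1 (memY.1 hy).2.2
  by_cases hu' : ∃ w ∈ Y, Gᶜ.Adj u w
  swap
  · push Not at hu'
    exact hasLinkedCliques_of_isClique_insert hY
      (fun y hy => adj_of_not_compl_adj (memY.1 hy).2.1.symm (hu' y hy)) (by omega) (by omega)
  by_cases hv' : ∃ w ∈ Y, Gᶜ.Adj v w
  swap
  · push Not at hv'
    exact hasLinkedCliques_of_isClique_insert hY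
      (fun y hy => adj_of_not_compl_adj (memY.1 hy).2.2.symm (hv' y hy)) (by omega) (by omega)
  -- `u` and `v` have the same unique `Gᶜ`-neighbour `w` in `Y`.
  obtain ⟨w, hw, huw⟩ := hu'
  obtain ⟨w', hw', hvw'⟩ := hv'
  obtain ⟨hwX, hwu, hwv⟩ := memY.1 hw
  obtain ⟨hw'X, hw'u, hw'v⟩ := memY.1 hw'
  have hu'' : ∀ y ∈ Y.erase w', G.Adj u y := fun y hy =>
    adj_of_not_hasDisjointCliques_compl h hv hw'X hvw' hu (memY.1 (mem_of_mem_erase hy)).1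
      (memY.1 (mem_of_mem_erase hy)).2.1.symm huv.ne hw'u.symm
      (memY.1 (mem_of_mem_erase hy)).2.2 (ne_of_mem_erase hy)
  have hv'' : ∀ y ∈ Y.erase w, G.Adj v y := fun y hy =>
    adj_of_not_hasDisjointCliques_compl h hu hwX huw hv (memY.1 (mem_of_mem_erase hy)).1
      (memY.1 (mem_of_mem_erase hy)).2.2.symm huv.ne.symm hwv.symm
      (memY.1 (mem_of_mem_erase hy)).2.1 (ne_of_mem_erase hy)
  obtain rfl : w = w' := by
    by_contra hne
    exact ((compl_adj G u w).1 huw).2 (hu'' w (mem_erase.2 ⟨hne, hw⟩))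
  refine hasLinkedCliques_of_isClique_of_forall_adj (hY.subset (coe_subset.2 (erase_subset _ _)))
    huv.ne hu'' hv'' hn ?_
  rw [card_erase_of_mem hw]
  omega

theorem hasLinkedCliques_or_hasDisjointCliques_compl_of_three_parts
    (hXY : Gᶜ.IsCompleteBetween X Y) (hXZ : Gᶜ.IsCompleteBetween X Z)
    (hYZ : Gᶜ.IsCompleteBetween Y Z) (hX : 2 ≤ #X) (hY : 2 ≤ #Y) (hZ : 2 ≤ #Z)
    (hcard : 23 ≤ #X + #Y + #Z) :
    G.HasLinkedCliques 4 ∨ Gᶜ.HasDisjointCliques (X ∪ Y ∪ Z) 4 4 := by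
  by_contra! ⟨hL, hD⟩
  have combine {a₁ b₁ a₂ b₂ a₃ b₃ : ℕ} (h₁ : Gᶜ.HasDisjointCliques X a₁ b₁)
      (h₂ : Gᶜ.HasDisjointCliques Y a₂ b₂) (h₃ : Gᶜ.HasDisjointCliques Z a₃ b₃)
      (ha : a₁ + a₂ + a₃ = 4) (hb : b₁ + b₂ + b₃ = 4) : False :=
    hD (by simpa only [ha, hb] using
      (h₁.union h₂ hXY).union h₃ (isCompleteBetween_union_left hXZ hYZ))
  have two_two {U : Finset V} (hU : 9 ≤ #U) : Gᶜ.HasDisjointCliques U 2 2 :=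
    (hasLinkedCliques_or_hasDisjointCliques_compl_two_two (n := 3) (by norm_num) hU).resolve_left hL
  have two_one {U : Finset V} (hU : #U = 8) : Gᶜ.HasDisjointCliques U 2 1 :=
    (hasLinkedCliques_or_hasDisjointCliques_compl_two_one (n := 4) (by norm_num) (by omega)
      (by omega)).resolve_left hL
  have one_one {U : Finset V} (hU : 2 ≤ #U) : Gᶜ.HasDisjointCliques U 1 1 :=
    hasDisjointCliques_one_one hU
  have hX8 : #X ≤ 8 := not_lt.1 fun h => combine (two_two h) (one_one hY) (one_one hZ) rfl rfl
  have hY8 : #Y ≤ 8 := not_lt.1 fun h => combine (one_one hX) (two_two h) (one_one hZ) rfl rfl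
  have hZ8 : #Z ≤ 8 := not_lt.1 fun h => combine (one_one hX) (one_one hY) (two_two h) rfl rfl
  obtain h | h | h : (#X = 8 ∧ #Y = 8) ∨ (#X = 8 ∧ #Z = 8) ∨ (#Y = 8 ∧ #Z = 8) := by omega
  · exact combine (two_one h.1) (two_one h.2).symm (one_one hZ) rfl rfl
  · exact combine (two_one h.1) (one_one hY) (two_one h.2).symm rfl rfl
  · exact combine (one_one hX) (two_one h.1) (two_one h.2).symm rfl rfl

end DecidableEq

section DecidableAdj

variable [DecidableEq V] [DecidableRel G.Adj]

theorem even_sum_card_filter_adj [Fintype V] (X : Finset V) :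
    Even (∑ v ∈ X, #{w ∈ X | G.Adj v w}) := by
  classical
  let K := ((⊤ : G.Subgraph).induce (X : Set V)).spanningCoe
  have hdeg : ∀ v, K.degree v = if v ∈ X then #{w ∈ X | G.Adj v w} else 0 := by
    intro v
    rw [← card_neighborFinset_eq_degree]
    split_ifs with hv
    · congr 1
      ext w
      simp [K, hv]
    · rw [card_eq_zero]
      ext w
      simp [K, hv]
  have h := K.sum_degrees_eq_twice_card_edges
  rw [sum_congr rfl fun v _ => hdeg v, sum_ite_mem, univ_inter] at h
  exact ⟨_, h.trans (two_mul _)⟩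

theorem card_le_card_filter_adj_add_compl {x : V} (hx : x ∈ X) :
    #X ≤ #{y ∈ X | G.Adj x y} + #{y ∈ X | Gᶜ.Adj x y} + 1 := by
  rw [← card_erase_add_one hx, add_le_add_iff_right]
  refine (card_le_card fun y hy => ?_).trans (card_union_le _ _)
  obtain ⟨hyx, hy⟩ := mem_erase.1 hy
  by_cases hxy : G.Adj x y <;> simp [hy, hxy, hyx.symm]

theorem exists_isNClique_three_of_three_le_card_filter_adj {x : V} (hx : x ∈ X)
    (h : 3 ≤ #{y ∈ X | G.Adj x y}) : ∃ S ⊆ X, G.IsNClique 3 S ∨ Gᶜ.IsNClique 3 S := by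
  obtain ⟨T, hT, hT3⟩ := exists_subset_card_eq h
  obtain ⟨a, b, c, hab, hac, hbc, rfl⟩ := card_eq_three.1 hT3
  have hmem : ∀ y ∈ ({a, b, c} : Finset V), y ∈ X ∧ G.Adj x y := fun y hy =>
    mem_filter.1 (hT hy)
  simp only [mem_insert, mem_singleton, forall_eq_or_imp, forall_eq] at hmem
  obtain ⟨⟨ha, hxa⟩, ⟨hb, hxb⟩, ⟨hc, hxc⟩⟩ := hmem
  by_cases hab' : G.Adj a b
  · exact ⟨{x, a, b}, by simp [insert_subset_iff, *],
      .inl (is3Clique_triple_iff.2 ⟨hxa, hxb, hab'⟩)⟩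
  by_cases hac' : G.Adj a c
  · exact ⟨{x, a, c}, by simp [insert_subset_iff, *],
      .inl (is3Clique_triple_iff.2 ⟨hxa, hxc, hac'⟩)⟩
  by_cases hbc' : G.Adj b c
  · exact ⟨{x, b, c}, by simp [insert_subset_iff, *],
      .inl (is3Clique_triple_iff.2 ⟨hxb, hxc, hbc'⟩)⟩
  exact ⟨{a, b, c}, by simp [insert_subset_iff, *], .inr (is3Clique_triple_iff.2
    ⟨(compl_adj G a b).2 ⟨hab, hab'⟩, (compl_adj G a c).2 ⟨hac, hac'⟩,
      (compl_adj G b c).2 ⟨hbc, hbc'⟩⟩)⟩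

end DecidableAdj

/-- `R(3,3) ≤ 6`. -/
theorem exists_isNClique_three_or_compl (h : 6 ≤ #X) :
    ∃ S ⊆ X, G.IsNClique 3 S ∨ Gᶜ.IsNClique 3 S := by
  classical
  obtain ⟨x, hx⟩ := card_pos.1 (by omega : 0 < #X)
  have hsplit := card_le_card_filter_adj_add_compl (G := G) hx
  by_cases h3 : 3 ≤ #{y ∈ X | G.Adj x y}
  · exact exists_isNClique_three_of_three_le_card_filter_adj hx h3
  · obtain ⟨S, hS, hS'⟩ :=
      exists_isNClique_three_of_three_le_card_filter_adj (G := Gᶜ) hx (by omega)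
    exact ⟨S, hS, by rwa [compl_compl, or_comm] at hS'⟩

/-- `R(3,4) ≤ 9`. -/
theorem exists_isNClique_four_of_cliqueFreeOn_compl [Fintype V] (h : 9 ≤ #X)
    (hX : Gᶜ.CliqueFreeOn X 3) : ∃ S ⊆ X, G.IsNClique 4 S := by
  classical
  obtain ⟨X₀, hX₀, hcard⟩ := exists_subset_card_eq h
  suffices ∃ S ⊆ X₀, G.IsNClique 4 S by
    obtain ⟨S, hS, hS'⟩ := this
    exact ⟨S, hS.trans hX₀, hS'⟩
  replace hX := CliqueFreeOn.subset _ (coe_subset.2 hX₀) hX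
  by_contra! hK4
  -- `Gᶜ` would be 3-regular on the 9 vertices of `X₀`, contradicting the handshake lemma.
  have hdeg : ∀ v ∈ X₀, #{w ∈ X₀ | Gᶜ.Adj v w} = 3 := by
    intro v hv
    refine le_antisymm (not_lt.1 fun h4 => ?_) (not_lt.1 fun h2 => ?_)
    · obtain ⟨T, hT, hT4⟩ := exists_subset_card_eq (Nat.succ_le_of_lt h4)
      refine hK4 T (hT.trans (filter_subset _ _)) ⟨fun a ha b hb hab => ?_, hT4⟩
      by_contra hab'
      have ha' := (mem_filter.1 (hT ha)).2
      have hb' := (mem_filter.1 (hT hb)).2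
      refine hX (t := {v, a, b}) ?_ (is3Clique_triple_iff.2
        ⟨ha', hb', (compl_adj G a b).2 ⟨hab, hab'⟩⟩)
      rw [coe_subset]
      simp [insert_subset_iff, hv, (mem_filter.1 (hT ha)).1, (mem_filter.1 (hT hb)).1]
    · have h6 : 6 ≤ #{w ∈ X₀ | G.Adj v w} := by
        have := card_le_card_filter_adj_add_compl (G := G) hv
        omega
      obtain ⟨S, hS, hS' | hS'⟩ := exists_isNClique_three_or_compl h6
      · exact hK4 (insert v S) (insert_subset hv (hS.trans (filter_subset _ _)))
          (hS'.insert fun b hb => (mem_filter.1 (hS hb)).2)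
      · exact hX (coe_subset.2 (hS.trans (filter_subset _ _))) hS'
  have hsum := even_sum_card_filter_adj (G := Gᶜ) X₀
  rw [sum_congr rfl hdeg, sum_const, hcard] at hsum
  exact absurd hsum (by decide)

theorem hasDisjointCliques_four_four_of_cliqueFreeOn_compl [Fintype V] (h : 13 ≤ #X)
    (hX : Gᶜ.CliqueFreeOn X 3) : G.HasDisjointCliques X 4 4 := by
  classical
  obtain ⟨S, hSX, hS⟩ := exists_isNClique_four_of_cliqueFreeOn_compl (by omega) hX
  obtain ⟨T, hTX, hT⟩ := exists_isNClique_four_of_cliqueFreeOn_compl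
    (X := X \ S) (by rw [card_sdiff_of_subset hSX, hS.card_eq]; omega)
    (CliqueFreeOn.subset _ (coe_subset.2 sdiff_subset) hX)
  exact hasDisjointCliques_of_subset_sdiff hS hSX hT hTX

theorem hasLinkedCliques_or_hasDisjointCliques_compl_of_large_part [Fintype V] [DecidableEq V]
    {P Q W : Finset V}
    (hP : ∀ u ∈ P, ∀ v ∈ P, G.Reachable u v) (hPQ : Gᶜ.IsCompleteBetween P Q)
    (hPW : Gᶜ.IsCompleteBetween P W) (hQW : Gᶜ.IsCompleteBetween Q W) (hQ4 : 4 ≤ #Q)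
    (hQ8 : #Q ≤ 8) (hW : #W ≤ 1) (hcard : 23 ≤ #P + #Q + #W) :
    G.HasLinkedCliques 4 ∨ Gᶜ.HasDisjointCliques (P ∪ (Q ∪ W)) 4 4 := by
  by_contra! ⟨hL, hD⟩
  have hQR : Q ⊆ Q ∪ W := subset_union_left
  have hR4 : 4 ≤ #(Q ∪ W) := hQ4.trans (card_le_card hQR)
  have combine {a b c d : ℕ} (h₁ : Gᶜ.HasDisjointCliques P a b)
      (h₂ : Gᶜ.HasDisjointCliques (Q ∪ W) c d) (hac : a + c = 4) (hbd : b + d = 4) : False :=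
    hD (by simpa only [hac, hbd] using h₁.union h₂ (isCompleteBetween_union_right hPQ hPW))
  have hP44 : ¬ G.HasDisjointCliques P 4 4 := fun h => hL (h.hasLinkedCliques hP (by norm_num))
  obtain ⟨T, hTP, hT⟩ : ∃ T ⊆ P, Gᶜ.IsNClique 3 T := by
    by_contra! h
    exact hP44 (hasDisjointCliques_four_four_of_cliqueFreeOn_compl (by omega)
      fun t ht => h t (coe_subset.1 ht))
  have hP' : #P = #(P \ T) + 3 := by rw [card_sdiff_of_subset hTP, hT.card_eq]; omega
  have hP'free : Gᶜ.CliqueFreeOn ↑(P \ T) 3 := fun t ht ht' => combine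
    (hasDisjointCliques_of_subset_sdiff hT hTP ht' (coe_subset.1 ht))
    (hasDisjointCliques_one_one (by omega)) rfl rfl
  by_cases h16 : 16 ≤ #P
  · exact hP44 ((hasDisjointCliques_four_four_of_cliqueFreeOn_compl (by omega) hP'free).mono
      sdiff_subset)
  obtain ⟨S, hSP, -, -, -, hS, -⟩ := (hasLinkedCliques_or_hasDisjointCliques_compl_two_one
    (X := P \ T) (n := 4) (by norm_num) (by omega) (by omega)).resolve_left hL
  refine combine (hasDisjointCliques_of_subset_sdiff hT hTP hS hSP) (c := 1) (d := 2) ?_ rfl rfl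
  obtain ⟨w, hw⟩ | hW0 := W.eq_empty_or_nonempty.symm
  · obtain ⟨q, hq⟩ := card_pos.1 (by omega : 0 < #Q)
    exact (HasDisjointCliques.of_isNClique (isNClique_pair_iff.2 (hQW hq hw))
      (by simp [insert_subset_iff, hq, hw]) (by omega)).symm
  · rw [hW0, card_empty] at hcard
    exact ((hasLinkedCliques_or_hasDisjointCliques_compl_two_one (n := 4) (by norm_num)
      (by omega) (by omega)).resolve_left hL).symm.mono hQR

theorem isCompleteBetween_compl_of_not_reachable {x : V} {P U : Finset V}
    (hP : ∀ p ∈ P, G.Reachable x p) (hU : ∀ u ∈ U, ¬ G.Reachable x u) :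
    Gᶜ.IsCompleteBetween P U := fun p hp u hu =>
  (G.reachable_or_compl_adj p u).resolve_left fun h => hU u hu ((hP p hp).trans h)

theorem hasLinkedCliques_or_hasDisjointCliques_compl_of_components [Fintype V] [DecidableEq V]
    {P Q W : Finset V} (hP : ∀ u ∈ P, ∀ v ∈ P, G.Reachable u v)
    (hQ : ∀ u ∈ Q, ∀ v ∈ Q, G.Reachable u v) (hPQ : Gᶜ.IsCompleteBetween P Q)
    (hPW : Gᶜ.IsCompleteBetween P W) (hQW : Gᶜ.IsCompleteBetween Q W) (hP4 : 4 ≤ #P)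
    (hQ4 : 4 ≤ #Q) (hcard : 23 ≤ #P + #Q + #W) :
    G.HasLinkedCliques 4 ∨ Gᶜ.HasDisjointCliques univ 4 4 := by
  by_cases hW : 2 ≤ #W
  · exact (hasLinkedCliques_or_hasDisjointCliques_compl_of_three_parts hPQ hPW hQW (by omega)
      (by omega) hW hcard).imp_right (·.mono (subset_univ _))
  by_cases hQ8 : #Q ≤ 8
  · exact (hasLinkedCliques_or_hasDisjointCliques_compl_of_large_part hP hPQ hPW hQW hQ4 hQ8
      (by omega) hcard).imp_right (·.mono (subset_univ _))
  by_cases hP8 : #P ≤ 8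
  · exact (hasLinkedCliques_or_hasDisjointCliques_compl_of_large_part hQ hPQ.symm hQW hPW hP4
      hP8 (by omega) (by omega)).imp_right (·.mono (subset_univ _))
  obtain h | hP22 := hasLinkedCliques_or_hasDisjointCliques_compl_two_two (G := G) (X := P)
    (n := 3) (by norm_num) (by omega)
  · exact .inl h
  obtain h | hQ22 := hasLinkedCliques_or_hasDisjointCliques_compl_two_two (G := G) (X := Q)
    (n := 3) (by norm_num) (by omega)
  · exact .inl h
  exact .inr ((hP22.union hQ22 hPQ).mono (subset_univ _))

theorem hasLinkedCliques_or_hasLinkedCliques_compl [Fintype V] (hV : 23 ≤ Fintype.card V)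
    {A B : Finset V} (hA : G.IsNClique 4 A) (hB : G.IsNClique 4 B) (hAB : Disjoint A B) :
    G.HasLinkedCliques 4 ∨ Gᶜ.HasLinkedCliques 4 := by
  classical
  obtain ⟨a, ha⟩ := card_pos.1 (hA.card_eq ▸ (by norm_num : 0 < 4))
  obtain ⟨b, hb⟩ := card_pos.1 (hB.card_eq ▸ (by norm_num : 0 < 4))
  by_cases hab : G.Reachable a b
  · exact .inl ⟨A, B, hAB, hA, hB, a, ha, b, hb, hab⟩
  have hcompl : ∀ u v, Gᶜ.Reachable u v := fun u v =>
    ((G.reachable_or_reachable_compl a b u).resolve_left hab).symm.trans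
      ((G.reachable_or_reachable_compl a b v).resolve_left hab)
  refine (?_ : G.HasLinkedCliques 4 ∨ Gᶜ.HasDisjointCliques univ 4 4).imp_right
    fun h => h.hasLinkedCliques (fun u _ v _ => hcompl u v) (by norm_num)
  set P := univ.filter (G.Reachable a)
  set Q := univ.filter (G.Reachable b)
  set W := univ \ (P ∪ Q)
  have hPa : ∀ p ∈ P, G.Reachable a p := fun p hp => (mem_filter.1 hp).2
  have hQb : ∀ q ∈ Q, G.Reachable b q := fun q hq => (mem_filter.1 hq).2
  have hPQ : Gᶜ.IsCompleteBetween P Q :=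
    isCompleteBetween_compl_of_not_reachable hPa fun q hq h => hab (h.trans (hQb q hq).symm)
  have hsum : #P + #Q + #W = Fintype.card V := by
    have hPQd := card_union_of_disjoint (disjoint_coe.1 hPQ.disjoint)
    have := card_le_univ (P ∪ Q)
    rw [card_sdiff_of_subset (subset_univ _), card_univ]
    omega
  refine hasLinkedCliques_or_hasDisjointCliques_compl_of_components
    (fun u hu v hv => (hPa u hu).symm.trans (hPa v hv))
    (fun u hu v hv => (hQb u hu).symm.trans (hQb v hv)) hPQ
    (isCompleteBetween_compl_of_not_reachable (U := W) hPa fun w hw h => by simp_all [W, P])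
    (isCompleteBetween_compl_of_not_reachable (U := W) hQb fun w hw h => by simp_all [W, Q])
    (hA.card_eq ▸ card_le_card fun x hx => mem_filter.2 ⟨mem_univ x, hA.1.reachable ha hx⟩)
    (hB.card_eq ▸ card_le_card fun x hx => mem_filter.2 ⟨mem_univ x, hB.1.reachable hb hx⟩)
    (by omega)

end SimpleGraph

section Coloring

variable {N : ℕ} {C : Sym2 (Fin N) → Bool}

theorem colorGraph_not_eq_compl (C : Sym2 (Fin N) → Bool) (i : Bool) :
    colorGraph C (!i) = (colorGraph C i)ᶜ := by
  ext u v
  cases i <;> cases C s(u, v) <;> simp_all [colorGraph]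

theorem isMonoClique_iff_isNClique {i : Bool} {r : ℕ} {S : Finset (Fin N)} :
    IsMonoClique C i r S ↔ (colorGraph C i).IsNClique r S :=
  ⟨fun h => ⟨fun u hu v hv huv => ⟨huv, h.2 u hu v hv huv⟩, h.1⟩,
    fun h => ⟨h.card_eq, fun _ hu _ hv huv => (h.isClique hu hv huv).2⟩⟩

theorem hasConnCliqueMatching_of_hasLinkedCliques {i : Bool} {n : ℕ}
    (h : (colorGraph C i).HasLinkedCliques n) : HasConnCliqueMatching C 2 n := by
  obtain ⟨S, T, hST, hS, hT, s, hs, t, ht, hst⟩ := h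
  have hreach : ∀ j, ∀ u ∈ ![S, T] j, (colorGraph C i).Reachable s u := by
    simp only [Fin.forall_fin_two, Matrix.cons_val_zero, Matrix.cons_val_one]
    exact ⟨fun u hu => hS.isClique.reachable hs hu,
      fun u hu => hst.trans (hT.isClique.reachable ht hu)⟩
  refine ⟨i, ![S, T], ?_, ?_, fun u v ⟨j, hu⟩ ⟨l, hv⟩ =>
    (hreach j u hu).symm.trans (hreach l v hv)⟩
  · simp [Fin.forall_fin_two, isMonoClique_iff_isNClique, hS, hT]
  · simp [Fin.forall_fin_two, hST, hST.symm]

end Coloring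

def blockColoring (N : ℕ) : Sym2 (Fin N) → Bool :=
  Sym2.lift ⟨fun u v => decide ((u : ℕ) / 7 = v / 7), fun _ _ => by simp [eq_comm]⟩

section BlockColoring

variable {N : ℕ}

theorem div_seven_eq_of_reachable {u v : Fin N}
    (h : (colorGraph (blockColoring N) true).Reachable u v) : (u : ℕ) / 7 = v / 7 := by
  obtain ⟨p⟩ := h
  induction p with
  | nil => rfl
  | cons hadj _ ih => exact (of_decide_eq_true hadj.2).trans ih

theorem card_le_seven_of_div_seven_eq {X : Finset (Fin N)} {c : ℕ}
    (h : ∀ x ∈ X, (x : ℕ) / 7 = c) : #X ≤ 7 := by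
  refine (card_le_card_of_injOn (fun x : Fin N => (x : ℕ) % 7) (t := range 7)
    (fun x _ => mem_range.2 (Nat.mod_lt _ (by norm_num))) fun x hx y hy hxy => ?_).trans_eq
    (card_range 7)
  have := Nat.div_add_mod x 7
  have := Nat.div_add_mod y 7
  have := h x hx
  have := h y hy
  simp only at hxy
  exact Fin.ext (by omega)

theorem exists_val_eq_twenty_one (hN : N ≤ 22) {S : Finset (Fin N)}
    (hS : IsMonoClique (blockColoring N) false 4 S) : ∃ x ∈ S, (x : ℕ) = 21 := by
  have hinj : Set.InjOn (fun x : Fin N => (x : ℕ) / 7) S := fun u hu v hv huv => by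
    by_contra hne
    exact of_decide_eq_false (hS.2 u hu v hv hne) huv
  have himage : S.image (fun x : Fin N => (x : ℕ) / 7) = range 4 :=
    eq_of_subset_of_card_le (fun k hk => by
      obtain ⟨x, -, rfl⟩ := mem_image.1 hk
      exact mem_range.2 (by omega))
      (by rw [card_image_of_injOn hinj, hS.1, card_range])
  obtain ⟨x, hx, hx3⟩ := mem_image.1 (himage ▸ mem_range.2 (by norm_num : 3 < 4))
  exact ⟨x, hx, by omega⟩

theorem not_hasConnCliqueMatching_blockColoring (hN : N ≤ 22) :
    ¬ HasConnCliqueMatching (blockColoring N) 2 4 := by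
  rintro ⟨i, f, hf, hdisj, hconn⟩
  have h01 : Disjoint (f 0) (f 1) := hdisj 0 1 (by decide)
  cases i
  · obtain ⟨x, hx, hx21⟩ := exists_val_eq_twenty_one hN (hf 0)
    obtain ⟨y, hy, hy21⟩ := exists_val_eq_twenty_one hN (hf 1)
    exact disjoint_left.1 h01 hx (Fin.ext (hx21.trans hy21.symm) ▸ hy)
  · obtain ⟨a, ha⟩ := card_pos.1 ((hf 0).1 ▸ (by norm_num : 0 < 4))
    have h8 := card_le_seven_of_div_seven_eq (X := f 0 ∪ f 1) fun x hx =>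
      (div_seven_eq_of_reachable (hconn a x ⟨0, ha⟩ (by simpa using hx))).symm
    rw [card_union_of_disjoint h01, (hf 0).1, (hf 1).1] at h8
    omega

end BlockColoring

/-- If `R₂(2K₄) ≤ 23`, i.e. every red/blue coloring of `K₂₃` contains two pairwise
vertex-disjoint copies of `K₄` in the same color, then `R₂(c(2K₄)) = 23`: the number `23` is
the least `N` such that every red/blue edge-coloring of the complete graph on `N` vertices
contains a monochromatic connected `2K₄`-matching. -/
theorem ramsey_connected_2K4
    (h : ∀ C : Sym2 (Fin 23) → Bool, ∃ i : Bool, HasMonoCliqueMatching C i 2 4) :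
    IsLeast {N : ℕ | ∀ C : Sym2 (Fin N) → Bool, HasConnCliqueMatching C 2 4} 23 := by
  refine ⟨fun C => ?_, fun N hN => not_lt.1 fun hlt =>
    not_hasConnCliqueMatching_blockColoring (by omega) (hN _)⟩
  obtain ⟨i, f, hf, hdisj⟩ := h C
  obtain hL | hL := (colorGraph C i).hasLinkedCliques_or_hasLinkedCliques_compl (by simp)
    (isMonoClique_iff_isNClique.1 (hf 0)) (isMonoClique_iff_isNClique.1 (hf 1))
    (hdisj 0 1 (by decide))
  · exact hasConnCliqueMatching_of_hasLinkedCliques hL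
  · rw [← colorGraph_not_eq_compl] at hL
    exact hasConnCliqueMatching_of_hasLinkedCliques hL
end

section
/- For all integers r ≥ 3 and n ≥ 2, there exists a red/blue edge-coloring of the complete graph on (r² - r + 1)n - r vertices that contains no monochromatic connected nK_r-matching; consequently R₂(c(nK_r)) ≥ (r² - r + 1)n - r + 1. -/
/-!
Split the vertices into `r - 1` red (`true`) cliques of `rn - 1` vertices each and a set `L` of the
remaining `n - 1` vertices, and colour every other edge blue; this uses
`(r - 1)(rn - 1) + (n - 1) = (r² - r + 1)n - r` vertices. A red component has fewer than `rn`
vertices, so it cannot hold `n` disjoint copies of `K_r`. A blue `K_r` has at most one vertex in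
each red clique, hence a vertex in `L`; so `n` disjoint blue copies of `K_r` would need `n`
vertices of `L`.
-/

open Finset

section CliqueMatching

variable {N n r : ℕ} {C : Sym2 (Fin N) → Bool} {i : Bool} {f : Fin n → Finset (Fin N)}

lemma card_biUnion_of_isMonoClique (hclique : ∀ j, IsMonoClique C i r (f j))
    (hdisj : ∀ j l, j ≠ l → Disjoint (f j) (f l)) : #(univ.biUnion f) = n * r := by
  rw [card_biUnion fun j _ l _ hjl => hdisj j l hjl]
  simp [fun j => (hclique j).1]

open scoped Classical in
lemma mul_le_card_reachable (hclique : ∀ j, IsMonoClique C i r (f j))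
    (hdisj : ∀ j l, j ≠ l → Disjoint (f j) (f l))
    (hconn : ∀ u v, (∃ j, u ∈ f j) → (∃ j, v ∈ f j) → (colorGraph C i).Reachable u v)
    {u : Fin N} (hu : ∃ j, u ∈ f j) :
    n * r ≤ #{v | (colorGraph C i).Reachable u v} := by
  rw [← card_biUnion_of_isMonoClique hclique hdisj]
  refine card_le_card fun v hv => ?_
  simp only [mem_biUnion, mem_univ, true_and] at hv
  simpa using hconn u v hu hv

end CliqueMatching

lemma le_card_of_forall_exists_mem {α : Type*} {n : ℕ} {f : Fin n → Finset α}
    (hdisj : ∀ j l, j ≠ l → Disjoint (f j) (f l)) (s : Finset α)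
    (hmeet : ∀ j, ∃ v ∈ f j, v ∈ s) : n ≤ #s := by
  choose g hgf hgs using hmeet
  have hg : Function.Injective g := fun j l hjl =>
    by_contra fun hne => disjoint_left.mp (hdisj j l hne) (hgf j) (hjl ▸ hgf l)
  simpa using card_le_card_of_injOn (s := univ) g (fun j _ => hgs j) hg.injOn

section PartColoring

variable {N : ℕ} (p : Fin N → ℕ) (k : ℕ)

def partColoring : Sym2 (Fin N) → Bool :=
  Sym2.lift ⟨fun u v => decide (p u = p v ∧ p u < k), fun u v => by
    simp only [decide_eq_decide]
    constructor <;> rintro ⟨h, hk⟩ <;> exact ⟨h.symm, h ▸ hk⟩⟩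

@[simp]
lemma partColoring_eq_true {u v : Fin N} :
    partColoring p k s(u, v) = true ↔ p u = p v ∧ p u < k := by
  simp [partColoring]

variable {p k}

lemma eq_of_reachable_partColoring {u v : Fin N}
    (h : (colorGraph (partColoring p k) true).Reachable u v) : p u = p v := by
  obtain ⟨w⟩ := h
  induction w with
  | nil => rfl
  | cons hadj _ ih => exact ((partColoring_eq_true p k).1 hadj.2).1.trans ih

lemma exists_le_of_isMonoClique_partColoring_false {r : ℕ} {S : Finset (Fin N)} (hkr : k < r)
    (hS : IsMonoClique (partColoring p k) false r S) : ∃ v ∈ S, k ≤ p v := by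
  by_contra! hlt
  have hinj : Set.InjOn p S := fun a ha b hb hab => by_contra fun hne => by
    simpa [partColoring, hab, hlt b hb] using hS.2 a ha b hb hne
  have := card_le_card_of_injOn p (fun v hv => mem_range.2 (hlt v hv)) hinj
  rw [hS.1, card_range] at this
  omega

theorem not_hasConnCliqueMatching_partColoring {n r : ℕ}
    (hfiber : ∀ q, #{v | p v = q} < n * r) (hlast : #{v | r - 1 ≤ p v} < n) :
    ¬ HasConnCliqueMatching (partColoring p (r - 1)) n r := by
  have hnr : 0 < n * r := (Nat.zero_le _).trans_lt (hfiber 0)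
  rintro ⟨_ | _, f, hclique, hdisj, hconn⟩
  · have := le_card_of_forall_exists_mem hdisj _ fun j => by
      obtain ⟨v, hv, hpv⟩ := exists_le_of_isMonoClique_partColoring_false
        (Nat.sub_lt (Nat.pos_of_mul_pos_left hnr) one_pos) (hclique j)
      exact ⟨v, hv, mem_filter.2 ⟨mem_univ v, hpv⟩⟩
    omega
  · have j₀ : Fin n := ⟨0, Nat.pos_of_mul_pos_right hnr⟩
    obtain ⟨u, hu⟩ : (f j₀).Nonempty := by
      rw [← card_pos, (hclique j₀).1]
      exact Nat.pos_of_mul_pos_left hnr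
    classical
    have hcomp : #{v | (colorGraph (partColoring p (r - 1)) true).Reachable u v}
        ≤ #{v | p v = p u} :=
      card_le_card <| monotone_filter_right _ fun v _ h => (eq_of_reachable_partColoring h).symm
    have := mul_le_card_reachable hclique hdisj hconn ⟨j₀, hu⟩
    have := hfiber (p u)
    omega

end PartColoring

lemma card_filter_div_eq_le {N m : ℕ} (hm : 0 < m) (q : ℕ) : #{v : Fin N | v / m = q} ≤ m := by
  have hinj : Set.InjOn (fun v : Fin N => v.val % m) ↑({v | v / m = q} : Finset (Fin N)) :=
    fun a ha b hb hab => by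
      simp only [coe_filter, mem_univ, true_and, Set.mem_ofPred_eq] at ha hb
      rw [Fin.ext_iff, ← Nat.div_add_mod a m, ← Nat.div_add_mod b m, ha, hb]
      exact congrArg (m * q + ·) hab
  simpa using card_le_card_of_injOn (t := range m) (fun v : Fin N => v.val % m)
    (fun v _ => mem_range.2 (Nat.mod_lt v hm)) hinj

lemma card_filter_le_div_le {N m : ℕ} (hm : 0 < m) (k : ℕ) :
    #{v : Fin N | k ≤ v / m} ≤ N - k * m := by
  have hmaps : Set.MapsTo (Fin.val : Fin N → ℕ) ↑({v | k ≤ v / m} : Finset (Fin N))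
      ↑(Ico (k * m) N) :=
    fun v hv => by
      simp only [coe_filter, mem_univ, true_and, Set.mem_ofPred_eq, Nat.le_div_iff_mul_le hm] at hv
      simp [hv, v.isLt]
  simpa using card_le_card_of_injOn _ hmaps Fin.val_injective.injOn

theorem not_hasConnCliqueMatching_partColoring_div {N m n r : ℕ} (hm : 0 < m) (hmnr : m < n * r)
    (hN : N ≤ (r - 1) * m + (n - 1)) :
    ¬ HasConnCliqueMatching (partColoring (fun v : Fin N => v / m) (r - 1)) n r := by
  have hn : 0 < n := Nat.pos_of_mul_pos_right (hm.trans hmnr)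
  refine not_hasConnCliqueMatching_partColoring (fun q => ?_) ?_
  · exact (card_filter_div_eq_le hm q).trans_lt hmnr
  · exact (card_filter_le_div_le hm (r - 1)).trans_lt (by omega)

lemma sq_sub_self_add_one_mul_sub_eq {r n : ℕ} (hr : 0 < r) (hn : 0 < n) :
    (r ^ 2 - r + 1) * n - r = (r - 1) * (r * n - 1) + (n - 1) := by
  have h1 : r ≤ r ^ 2 := Nat.le_self_pow two_ne_zero r
  have h2 : 1 ≤ r * n := Nat.one_le_iff_ne_zero.2 (by positivity)
  have h3 : r ≤ (r ^ 2 - r + 1) * n := by nlinarith [Nat.sub_add_cancel h1]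
  zify [h1, h2, h3, hr, hn]
  ring

/-- **Lower bound.** For all `r ≥ 3` and `n ≥ 2`, there is a red/blue edge-coloring of the
complete graph on `(r² - r + 1)n - r` vertices with no monochromatic connected
`nK_r`-matching; consequently `R₂(c(nK_r)) ≥ (r² - r + 1)n - r + 1`. -/
theorem ramsey_connected_matching_lower_bound (r n : ℕ) (hr : 3 ≤ r) (hn : 2 ≤ n) :
    (∃ C : Sym2 (Fin ((r ^ 2 - r + 1) * n - r)) → Bool, ¬ HasConnCliqueMatching C n r) ∧
    ∀ R : ℕ,
      IsLeast {N : ℕ | ∀ C : Sym2 (Fin N) → Bool, HasConnCliqueMatching C n r} R →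
      (r ^ 2 - r + 1) * n - r + 1 ≤ R := by
  have hrn : 2 ≤ r * n := by nlinarith
  have key : ∀ N ≤ (r ^ 2 - r + 1) * n - r,
      ¬ HasConnCliqueMatching (partColoring (fun v : Fin N => v / (r * n - 1)) (r - 1)) n r :=
    fun N hN => not_hasConnCliqueMatching_partColoring_div (by omega)
      (by rw [Nat.mul_comm n r]; omega)
      (hN.trans_eq (sq_sub_self_add_one_mul_sub_eq (by omega) (by omega)))
  refine ⟨⟨_, key _ le_rfl⟩, fun R hR => ?_⟩
  by_contra! hlt
  exact key R (by omega) (hR.1 _)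
end

section
/- Let n ≥ 2 and k ≥ 2 be positive integers with k ≥ 2n - 3 + ⌊(n-1)/4⌋, and let k = a₁ + a₂ + ⋯ + a_t with n - 1 ≥ a₁ ≥ a₂ ≥ ⋯ ≥ a_t ≥ 1. If it is NOT the case that both a₁ ≥ n - 2 and a₂ ≥ n - 2 with a₃ + a₄ + ⋯ + a_t < ⌈n/4⌉, then a₁, a₂, …, a_t can be partitioned into three groups such that the sum of each group is at least ⌈n/4⌉. -/
/-! Write `q = ⌈n/4⌉`. If `a₀, a₁ ≥ n - 2`, the groups are `{a₀}`, `{a₁}` and the rest.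
Otherwise `a₁ ≤ n - 3`, and we cut off two consecutive blocks greedily, each the shortest one
whose sum reaches `q`. As the terms do not increase, such a block is a single term or consists of
terms below `q`; so the two blocks have sums at most `max a₀ (2q - 2)` and `max a₁ (2q - 2)`,
together at most `2n - 4`, and what remains has sum at least `k - (2n - 4) ≥ q`. -/

open Finset

lemma exists_three_groups_of_consecutive_blocks (a : ℕ → ℕ) {q p₁ p₂ t : ℕ} (hq : 0 < q)
    (h₀ : q ≤ ∑ i ∈ range p₁, a i) (h₁ : q ≤ ∑ i ∈ Ico p₁ p₂, a i)
    (h₂ : q ≤ ∑ i ∈ Ico p₂ t, a i) :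
    ∃ g : ℕ → Fin 3,
      (∀ j : Fin 3, ∃ i, i < t ∧ g i = j) ∧
      ∀ j : Fin 3, q ≤ ∑ i ∈ (range t).filter (fun i => g i = j), a i := by
  have hlt : ∀ {m l : ℕ}, q ≤ ∑ i ∈ Ico m l, a i → m < l := fun h =>
    nonempty_Ico.mp (nonempty_of_sum_ne_zero (f := a) (by omega))
  have hp₁ : 0 < p₁ := hlt (by rwa [← range_eq_Ico])
  have hp₁₂ : p₁ < p₂ := hlt h₁
  have hp₂ : p₂ < t := hlt h₂
  refine ⟨fun i => if i < p₁ then 0 else if i < p₂ then 1 else 2, ?_, ?_⟩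
  · intro j
    fin_cases j
    · exact ⟨0, by omega, by simp [hp₁]⟩
    · exact ⟨p₁, by omega, by simp [hp₁₂]⟩
    · exact ⟨p₂, hp₂, by simp [hp₁₂.le]⟩
  · intro j
    fin_cases j
    · convert h₀ using 2
      ext i; simp only [mem_filter, mem_range]; grind
    · convert h₁ using 2
      ext i; simp only [mem_filter, mem_range]; grind
    · convert h₂ using 2
      ext i; simp only [mem_filter, mem_range]; grind

lemma exists_Ico_sum_ge_le_max {a : ℕ → ℕ} {m t q : ℕ} (ha : AntitoneOn a (Set.Ico m t))
    (hq : 0 < q) (hqt : q ≤ ∑ i ∈ Ico m t, a i) :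
    ∃ p, m < p ∧ p ≤ t ∧ q ≤ ∑ i ∈ Ico m p, a i ∧ ∑ i ∈ Ico m p, a i ≤ max (a m) (2 * q - 2) := by
  classical
  have hex : ∃ p, q ≤ ∑ i ∈ Ico m p, a i := ⟨t, hqt⟩
  set p := Nat.find hex
  have hp : q ≤ ∑ i ∈ Ico m p, a i := Nat.find_spec hex
  have hpt : p ≤ t := Nat.find_min' hex hqt
  have hmp : m < p := nonempty_Ico.mp (nonempty_of_sum_ne_zero (f := a) (by omega))
  have hprev : ∑ i ∈ Ico m (p - 1), a i < q := not_le.mp (Nat.find_min hex (by omega))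
  have hsplit : ∑ i ∈ Ico m p, a i = ∑ i ∈ Ico m (p - 1), a i + a (p - 1) := by
    rw [← sum_Ico_succ_top (by omega), Nat.sub_add_cancel (by omega)]
  refine ⟨p, hmp, hpt, hp, ?_⟩
  rcases (Nat.succ_le_of_lt hmp).eq_or_lt with hp1 | hp1
  · rw [← hp1, Nat.Ico_succ_singleton, sum_singleton]
    exact le_max_left _ _
  · have hm : a m < q :=
      (single_le_sum (fun _ _ => Nat.zero_le _) (left_mem_Ico.mpr (by omega))).trans_lt hprev
    have hlast : a (p - 1) ≤ a m :=
      ha (Set.left_mem_Ico.mpr (by omega)) ⟨by omega, by omega⟩ (by omega)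
    omega

theorem partition_lemma_remark_general (n k t : ℕ) (hn : 2 ≤ n) (hk2 : 2 ≤ k)
    (hk : 2 * n - 3 + (n - 1) / 4 ≤ k)
    (a : ℕ → ℕ)
    (hsum : ∑ i ∈ Finset.range t, a i = k)
    (hmono : ∀ i j, i ≤ j → j < t → a j ≤ a i)
    (hub : a 0 ≤ n - 1)
    (hlb : ∀ i, i < t → 1 ≤ a i)
    (hnot : ¬ (n - 2 ≤ a 0 ∧ n - 2 ≤ a 1 ∧ ∑ i ∈ Finset.Ico 2 t, a i < (n + 3) / 4)) :
    ∃ g : ℕ → Fin 3,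
      (∀ j : Fin 3, ∃ i, i < t ∧ g i = j) ∧
      ∀ j : Fin 3, (n + 3) / 4 ≤ ∑ i ∈ (Finset.range t).filter (fun i => g i = j), a i := by
  set q := (n + 3) / 4
  have hq : 0 < q := by omega
  have ht2 : 2 ≤ t := by
    by_contra! ht
    interval_cases t <;> (simp only [sum_range_zero, sum_range_one] at hsum; omega)
  have ha : AntitoneOn a (Set.Iio t) := fun i _ j hj hij => hmono i j hij hj
  have ha10 : a 1 ≤ a 0 := hmono 0 1 zero_le_one ht2
  by_cases h1 : n - 2 ≤ a 1
  · have hqa1 : q ≤ a 1 := by have := hlb 1 ht2; omega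
    refine exists_three_groups_of_consecutive_blocks a hq (p₁ := 1) (p₂ := 2)
      (by simpa using hqa1.trans ha10) (by simpa using hqa1) ?_
    by_contra! hrest
    exact hnot ⟨h1.trans ha10, h1, hrest⟩
  · rw [range_eq_Ico] at hsum
    obtain ⟨p₁, hp₁, hp₁t, hq₁, hs₁⟩ :=
      exists_Ico_sum_ge_le_max (ha.mono (Set.Ico_subset_Iio_self (a := 0))) hq (by omega)
    have hsplit₁ := sum_Ico_consecutive a (Nat.zero_le p₁) hp₁t
    obtain ⟨p₂, hp₁₂, hp₂t, hq₂, hs₂⟩ :=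
      exists_Ico_sum_ge_le_max (ha.mono (Set.Ico_subset_Iio_self (a := p₁))) hq (by omega)
    have hsplit₂ := sum_Ico_consecutive a hp₁₂.le hp₂t
    have hap₁ : a p₁ ≤ a 1 := hmono 1 p₁ (by omega) (by omega)
    exact exists_three_groups_of_consecutive_blocks a hq (by rwa [range_eq_Ico]) hq₂ (by omega)

/-- **Remark after Lemma 2.** Let `n ≥ 2` and `k ≥ 2` with `k ≥ 2n - 3 + ⌊(n-1)/4⌋`, and let
`k = a₀ + a₁ + ⋯ + a_{t-1}` with `n - 1 ≥ a₀ ≥ a₁ ≥ ⋯ ≥ a_{t-1} ≥ 1` (with `a i = 0` for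
`i ≥ t`, so that missing terms are read as `0`). If it is not the case that both
`a₀ ≥ n - 2` and `a₁ ≥ n - 2` with `a₂ + a₃ + ⋯ + a_{t-1} < ⌈n/4⌉`, then the `aᵢ` can be
partitioned into three nonempty groups each of sum at least `⌈n/4⌉`. -/
theorem partition_lemma_remark (n k t : ℕ) (hn : 2 ≤ n) (hk2 : 2 ≤ k)
    (hk : 2 * n - 3 + (n - 1) / 4 ≤ k)
    (ht : 1 ≤ t) (a : ℕ → ℕ)
    (hsum : ∑ i ∈ Finset.range t, a i = k)
    (hmono : ∀ i j, i ≤ j → j < t → a j ≤ a i)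
    (hub : a 0 ≤ n - 1)
    (hlb : ∀ i, i < t → 1 ≤ a i)
    (hzero : ∀ i, t ≤ i → a i = 0)
    (hnot : ¬ (n - 2 ≤ a 0 ∧ n - 2 ≤ a 1 ∧ ∑ i ∈ Finset.Ico 2 t, a i < (n + 3) / 4)) :
    ∃ g : ℕ → Fin 3,
      (∀ j : Fin 3, ∃ i, i < t ∧ g i = j) ∧
      ∀ j : Fin 3, (n + 3) / 4 ≤ ∑ i ∈ (Finset.range t).filter (fun i => g i = j), a i :=
  partition_lemma_remark_general n k t hn hk2 hk a hsum hmono hub hlb hnot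
end
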